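/- arXiv:2403.01282 — 5 statements merged into one kernel-verified Lean document; each statement's English description precedes it below -/
import Mathlib

section
/- If n₁ and k₁ are natural numbers with k₁ < n₁/2 - 7/9 - (1/18)·√(9n₁² + 16), then 2·(n₁ - 2k₁ - 2)·(n₁ - 2k₁ - 1) > (n₁ - k₁ - 1)·(k₁ + 1). -/
theorem stmt_4 (n₁ k₁ : ℕ)
    (h : (k₁ : ℝ) < n₁ / 2 - 7 / 9 - (1 / 18) * Real.sqrt (9 * (n₁ : ℝ) ^ 2 + 16)) :
    2 * ((n₁ : ℝ) - 2 * k₁ - 2) * ((n₁ : ℝ) - 2 * k₁ - 1) >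
      ((n₁ : ℝ) - k₁ - 1) * ((k₁ : ℝ) + 1) := by
  set s := Real.sqrt (9 * (n₁ : ℝ) ^ 2 + 16) with hs
  have h0 : (0:ℝ) ≤ 9 * (n₁ : ℝ) ^ 2 + 16 := by positivity
  have hs2 : s ^ 2 = 9 * (n₁ : ℝ) ^ 2 + 16 := Real.sq_sqrt h0
  have hs0 : 0 ≤ s := Real.sqrt_nonneg _
  nlinarith [sq_nonneg s, sq_nonneg ((n₁:ℝ) - 2*k₁), mul_nonneg hs0 hs0]
end

section
/- Let T be an unrooted binary phylogenetic tree, e an inner edge of T splitting T into four rooted subtrees T₁, T₂, T₃, T₄ (T₁, T₂ on one side, T₃, T₄ on the other), and f a binary character with restrictions fᵢ to the leaves of Tᵢ. Define δ(f, T, e) = l(f, T) - Σᵢ l(fᵢ, Tᵢ). Then δ(f, T, e) ∈ {0, 1, 2}. -/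
/-- A rooted binary tree whose leaves are labeled with states of the binary character
(we identify the state `a` with `true` and `b` with `false`; since each statement concerns a
fixed character `f`, we record directly the state `f` assigns to each leaf). -/
inductive BTree : Type
  | leaf : Bool → BTree
  | node : BTree → BTree → BTree

namespace BTree

/-- The set of states the Fitch algorithm assigns to the root of a rooted binary tree. -/
def fitchSet : BTree → Finset Bool
  | leaf b => {b}
  | node l r =>
      if fitchSet l ∩ fitchSet r = ∅ then fitchSet l ∪ fitchSet r else fitchSet l ∩ fitchSet r

/-- The number of union nodes of the Fitch algorithm, i.e. (by Fitch's theorem) the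
parsimony score `l(f,T)` of the character on the rooted binary tree. -/
def fitchScore : BTree → ℕ
  | leaf _ => 0
  | node l r =>
      fitchScore l + fitchScore r + (if fitchSet l ∩ fitchSet r = ∅ then 1 else 0)

end BTree

/-- The parsimony score `l(f,T)` of the character on the unrooted binary tree `T` obtained by
joining the four rooted subtrees `T₁,T₂,T₃,T₄` around an inner edge `e = {u,v}`, with `T₁,T₂`
adjacent to `u` and `T₃,T₄` adjacent to `v`: it equals the Fitch score of the rooted version
of `T` obtained by subdividing `e`. -/
def score4 (t1 t2 t3 t4 : BTree) : ℕ :=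
  BTree.fitchScore (.node (.node t1 t2) (.node t3 t4))

/-- `δ(f,T,e) = l(f,T) - Σᵢ l(fᵢ,Tᵢ)` for the unrooted tree built from `T₁,T₂,T₃,T₄`
around the inner edge `e` (as an integer). -/
def delta4 (t1 t2 t3 t4 : BTree) : ℤ :=
  (score4 t1 t2 t3 t4 : ℤ) -
    ((BTree.fitchScore t1 : ℤ) + BTree.fitchScore t2 + BTree.fitchScore t3 + BTree.fitchScore t4)

lemma fitchSet_nonempty (t : BTree) : (BTree.fitchSet t).Nonempty := by
  induction t with
  | leaf b => exact ⟨b, by simp [BTree.fitchSet]⟩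
  | node l r hl hr =>
      simp only [BTree.fitchSet]
      split
      · exact hl.mono Finset.subset_union_left
      · rwa [Finset.nonempty_iff_ne_empty]

lemma union_univ {s t : Finset Bool} (hs : s.Nonempty) (ht : t.Nonempty)
    (h : s ∩ t = ∅) : s ∪ t = Finset.univ := by
  obtain ⟨a, ha⟩ := hs
  obtain ⟨b, hb⟩ := ht
  have hab : a ≠ b := by
    rintro rfl
    exact absurd (Finset.mem_inter.mpr ⟨ha, hb⟩) (by simp [h])
  apply Finset.eq_univ_of_forall
  intro x
  rcases Bool.eq_false_or_eq_true x with hx | hx <;>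
    rcases Bool.eq_false_or_eq_true a with hA | hA <;>
    rcases Bool.eq_false_or_eq_true b with hB | hB <;>
    subst hx <;> first
      | (exact Finset.mem_union_left _ (hA ▸ ha))
      | (exact Finset.mem_union_right _ (hB ▸ hb))
      | (exact absurd (hA.trans hB.symm) hab)

theorem stmt_9 (t1 t2 t3 t4 : BTree) :
    delta4 t1 t2 t3 t4 ∈ ({0, 1, 2} : Set ℤ) := by
  have n1 := fitchSet_nonempty t1
  have n2 := fitchSet_nonempty t2
  have n3 := fitchSet_nonempty t3
  have n4 := fitchSet_nonempty t4
  simp only [delta4, score4, BTree.fitchScore, BTree.fitchSet]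
  by_cases h12 : BTree.fitchSet t1 ∩ BTree.fitchSet t2 = ∅ <;>
    by_cases h34 : BTree.fitchSet t3 ∩ BTree.fitchSet t4 = ∅
  · have e12 := union_univ n1 n2 h12
    have e34 := union_univ n3 n4 h34
    simp [h12, h34, e12, e34, Set.mem_insert_iff]
    omega
  · by_cases htop : (BTree.fitchSet t1 ∪ BTree.fitchSet t2) ∩
        (BTree.fitchSet t3 ∩ BTree.fitchSet t4) = ∅ <;>
      simp [h12, h34, htop, Set.mem_insert_iff] <;> omega
  · by_cases htop : BTree.fitchSet t1 ∩ (BTree.fitchSet t2 ∩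
        (BTree.fitchSet t3 ∪ BTree.fitchSet t4)) = ∅ <;>
      simp [h12, h34, htop, Set.mem_insert_iff, Finset.inter_assoc] <;> omega
  · by_cases htop : BTree.fitchSet t1 ∩ (BTree.fitchSet t2 ∩
        (BTree.fitchSet t3 ∩ BTree.fitchSet t4)) = ∅ <;>
      simp [h12, h34, htop, Set.mem_insert_iff, Finset.inter_assoc] <;> omega
end

section
/- Let T and T' be NNI neighbors obtained by swapping subtrees T₂ and T₄ around an inner edge e (with corresponding edge e' in T'). Let f be a binary character, and suppose the Fitch algorithm assigns each root ρᵢ of Tᵢ a set S(ρᵢ) with S(ρᵢ) ∈ {{a}, {a,b}} for all i = 1,…,4, or S(ρᵢ) ∈ {{b}, {a,b}} for all i. Then δ(f, T, e) = δ(f, T', e') = 0 and l(f, T) = l(f, T'). -/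
/-- If each Fitch root set `S(ρᵢ)` lies in `{{a},{a,b}}` for all `i`, or lies in
`{{b},{a,b}}` for all `i`, then `δ(f,T,e) = δ(f,T',e') = 0` and `l(f,T) = l(f,T')`,
where `T'` is the NNI neighbor obtained from `T` by swapping `T₂` and `T₄` around `e`. -/
theorem stmt_10 (t1 t2 t3 t4 : BTree)
    (h : (∀ t ∈ [t1, t2, t3, t4],
            BTree.fitchSet t = {true} ∨ BTree.fitchSet t = ({true, false} : Finset Bool)) ∨
         (∀ t ∈ [t1, t2, t3, t4],
            BTree.fitchSet t = {false} ∨ BTree.fitchSet t = ({true, false} : Finset Bool))) :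
    delta4 t1 t2 t3 t4 = 0 ∧ delta4 t1 t4 t3 t2 = 0 ∧
      score4 t1 t2 t3 t4 = score4 t1 t4 t3 t2 := by

  have key : ∀ a b c d : Finset Bool,
      (a = {true} ∨ a = ({true, false} : Finset Bool)) →
      (b = {true} ∨ b = ({true, false} : Finset Bool)) →
      (c = {true} ∨ c = ({true, false} : Finset Bool)) →
      (d = {true} ∨ d = ({true, false} : Finset Bool)) →
      ((if (if a ∩ b = ∅ then a ∪ b else a ∩ b) ∩ (if c ∩ d = ∅ then c ∪ d else c ∩ d) = ∅ then (1:ℕ) else 0)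
        + (if a ∩ b = ∅ then (1:ℕ) else 0) + (if c ∩ d = ∅ then (1:ℕ) else 0) = 0) := by
    rintro a b c d (rfl|rfl) (rfl|rfl) (rfl|rfl) (rfl|rfl) <;> decide
  have key' : ∀ a b c d : Finset Bool,
      (a = {false} ∨ a = ({true, false} : Finset Bool)) →
      (b = {false} ∨ b = ({true, false} : Finset Bool)) →
      (c = {false} ∨ c = ({true, false} : Finset Bool)) →
      (d = {false} ∨ d = ({true, false} : Finset Bool)) →
      ((if (if a ∩ b = ∅ then a ∪ b else a ∩ b) ∩ (if c ∩ d = ∅ then c ∪ d else c ∩ d) = ∅ then (1:ℕ) else 0)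
        + (if a ∩ b = ∅ then (1:ℕ) else 0) + (if c ∩ d = ∅ then (1:ℕ) else 0) = 0) := by
    rintro a b c d (rfl|rfl) (rfl|rfl) (rfl|rfl) (rfl|rfl) <;> decide
  have E : ∀ u v w x : BTree,
      (∀ t ∈ [u, v, w, x],
            BTree.fitchSet t = {true} ∨ BTree.fitchSet t = ({true, false} : Finset Bool)) ∨
      (∀ t ∈ [u, v, w, x],
            BTree.fitchSet t = {false} ∨ BTree.fitchSet t = ({true, false} : Finset Bool)) →
      delta4 u v w x = 0 := by
    intro u v w x h
    have hz : (if (if BTree.fitchSet u ∩ BTree.fitchSet v = ∅ then BTree.fitchSet u ∪ BTree.fitchSet v else BTree.fitchSet u ∩ BTree.fitchSet v) ∩ (if BTree.fitchSet w ∩ BTree.fitchSet x = ∅ then BTree.fitchSet w ∪ BTree.fitchSet x else BTree.fitchSet w ∩ BTree.fitchSet x) = ∅ then (1:ℕ) else 0)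
        + (if BTree.fitchSet u ∩ BTree.fitchSet v = ∅ then (1:ℕ) else 0) + (if BTree.fitchSet w ∩ BTree.fitchSet x = ∅ then (1:ℕ) else 0) = 0 := by
      rcases h with h | h
      · exact key _ _ _ _ (h u (by simp)) (h v (by simp)) (h w (by simp)) (h x (by simp))
      · exact key' _ _ _ _ (h u (by simp)) (h v (by simp)) (h w (by simp)) (h x (by simp))
    have h1 : (if BTree.fitchSet u ∩ BTree.fitchSet v = ∅ then (1:ℕ) else 0) = 0 := by omega
    have h2 : (if BTree.fitchSet w ∩ BTree.fitchSet x = ∅ then (1:ℕ) else 0) = 0 := by omega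
    have h3 : (if (if BTree.fitchSet u ∩ BTree.fitchSet v = ∅ then BTree.fitchSet u ∪ BTree.fitchSet v else BTree.fitchSet u ∩ BTree.fitchSet v) ∩ (if BTree.fitchSet w ∩ BTree.fitchSet x = ∅ then BTree.fitchSet w ∪ BTree.fitchSet x else BTree.fitchSet w ∩ BTree.fitchSet x) = ∅ then (1:ℕ) else 0) = 0 := by omega
    simp only [delta4, score4, BTree.fitchScore, BTree.fitchSet, h1, h2, h3]
    push_cast
    ring_nf
    exact_mod_cast h3
  have h' : (∀ t ∈ [t1, t4, t3, t2],
            BTree.fitchSet t = {true} ∨ BTree.fitchSet t = ({true, false} : Finset Bool)) ∨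
         (∀ t ∈ [t1, t4, t3, t2],
            BTree.fitchSet t = {false} ∨ BTree.fitchSet t = ({true, false} : Finset Bool)) := by
    rcases h with h | h
    · exact Or.inl (fun t ht => h t (by simp at ht ⊢; tauto))
    · exact Or.inr (fun t ht => h t (by simp at ht ⊢; tauto))
  have d1 := E t1 t2 t3 t4 h
  have d2 := E t1 t4 t3 t2 h'
  refine ⟨d1, d2, ?_⟩
  have : (score4 t1 t2 t3 t4 : ℤ) = score4 t1 t4 t3 t2 := by
    simp only [delta4] at d1 d2; omega
  exact_mod_cast this
end

section
/- Let T and T' be NNI neighbors (swapping T₂ and T₄ around inner edge e, giving edge e' in T'), and let f be a binary character with l(f, T) ≠ l(f, T'). Then {δ(f, T, e), δ(f, T', e')} = {1, 2}; moreover, exactly two of the Fitch root sets S(ρ₁), S(ρ₂), S(ρ₃), S(ρ₄) equal {a} and the other two equal {b}, and either S(ρ₁) = S(ρ₂) ≠ S(ρ₃) = S(ρ₄) or S(ρ₁) = S(ρ₄) ≠ S(ρ₂) = S(ρ₃). -/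
namespace StmtAux

def F (x y : Finset Bool) : Finset Bool := if x ∩ y = ∅ then x ∪ y else x ∩ y

def gN (a b c d : Finset Bool) : ℕ :=
  (if a ∩ b = ∅ then 1 else 0) + (if c ∩ d = ∅ then 1 else 0) +
    (if (F a b) ∩ (F c d) = ∅ then 1 else 0)

lemma score4_eq (t1 t2 t3 t4 : BTree) :
    score4 t1 t2 t3 t4 =
      BTree.fitchScore t1 + BTree.fitchScore t2 + BTree.fitchScore t3 + BTree.fitchScore t4 +
        gN (BTree.fitchSet t1) (BTree.fitchSet t2) (BTree.fitchSet t3) (BTree.fitchSet t4) := by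
  simp only [score4, BTree.fitchScore, gN, F, BTree.fitchSet]
  split_ifs <;> ring

lemma delta4_eq (t1 t2 t3 t4 : BTree) :
    delta4 t1 t2 t3 t4 =
      (gN (BTree.fitchSet t1) (BTree.fitchSet t2) (BTree.fitchSet t3) (BTree.fitchSet t4) : ℤ) := by
  rw [delta4, score4_eq]
  push_cast
  ring

lemma fitchSet_ne_empty (t : BTree) : BTree.fitchSet t ≠ ∅ := by
  induction t with
  | leaf b => simp [BTree.fitchSet]
  | node l r hl hr =>
    simp only [BTree.fitchSet]
    split
    · intro h
      apply hl
      rw [← Finset.subset_empty, ← h]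
      exact Finset.subset_union_left
    · assumption

set_option synthInstance.maxSize 2000 in
set_option maxHeartbeats 1000000 in
lemma key : ∀ a b c d : Finset Bool, a ≠ ∅ → b ≠ ∅ → c ≠ ∅ → d ≠ ∅ →
    gN a b c d ≠ gN a d c b →
    ((gN a b c d = 2 ∧ gN a d c b = 1) ∨ (gN a b c d = 1 ∧ gN a d c b = 2)) ∧
    ((a = {true} ∨ a = {false}) ∧ (b = {true} ∨ b = {false}) ∧
      (c = {true} ∨ c = {false}) ∧ (d = {true} ∨ d = {false})) ∧
    ((a = b ∧ c = d ∧ a ≠ c) ∨ (a = d ∧ b = c ∧ a ≠ b)) := by decide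

end StmtAux

/-- Proposition 1: if the NNI neighbors `T` (built as `(T₁T₂|T₃T₄)`) and `T'` (built as
`(T₁T₄|T₃T₂)`, i.e. swapping `T₂` and `T₄`) have different parsimony scores for `f`, then
`{δ(f,T,e), δ(f,T',e')} = {1,2}`; moreover each Fitch root set `S(ρᵢ)` is a singleton
(two of them `{a}` and the other two `{b}`), and either `S(ρ₁)=S(ρ₂) ≠ S(ρ₃)=S(ρ₄)` or
`S(ρ₁)=S(ρ₄) ≠ S(ρ₂)=S(ρ₃)`. -/
theorem stmt_11 (t1 t2 t3 t4 : BTree)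
    (h : score4 t1 t2 t3 t4 ≠ score4 t1 t4 t3 t2) :
    ((delta4 t1 t2 t3 t4 = 2 ∧ delta4 t1 t4 t3 t2 = 1) ∨
      (delta4 t1 t2 t3 t4 = 1 ∧ delta4 t1 t4 t3 t2 = 2)) ∧
    (∀ t ∈ [t1, t2, t3, t4], BTree.fitchSet t = {true} ∨ BTree.fitchSet t = {false}) ∧
    ((BTree.fitchSet t1 = BTree.fitchSet t2 ∧ BTree.fitchSet t3 = BTree.fitchSet t4 ∧
        BTree.fitchSet t1 ≠ BTree.fitchSet t3) ∨
      (BTree.fitchSet t1 = BTree.fitchSet t4 ∧ BTree.fitchSet t2 = BTree.fitchSet t3 ∧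
        BTree.fitchSet t1 ≠ BTree.fitchSet t2)) := by
  have hne : StmtAux.gN (BTree.fitchSet t1) (BTree.fitchSet t2) (BTree.fitchSet t3)
      (BTree.fitchSet t4) ≠ StmtAux.gN (BTree.fitchSet t1) (BTree.fitchSet t4)
      (BTree.fitchSet t3) (BTree.fitchSet t2) := by
    intro heq
    apply h
    rw [StmtAux.score4_eq, StmtAux.score4_eq, heq]
    ring
  obtain ⟨h1, ⟨ha, hb, hc, hd⟩, h3⟩ :=
    StmtAux.key _ _ _ _ (StmtAux.fitchSet_ne_empty t1) (StmtAux.fitchSet_ne_empty t2)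
      (StmtAux.fitchSet_ne_empty t3) (StmtAux.fitchSet_ne_empty t4) hne
  refine ⟨?_, ?_, h3⟩
  · rw [StmtAux.delta4_eq, StmtAux.delta4_eq]
    rcases h1 with ⟨h1, h2⟩ | ⟨h1, h2⟩
    · left; rw [h1, h2]; exact ⟨rfl, rfl⟩
    · right; rw [h1, h2]; exact ⟨rfl, rfl⟩
  · intro t ht
    simp only [List.mem_cons, List.not_mem_nil, or_false] at ht
    rcases ht with rfl | rfl | rfl | rfl <;> assumption
end

section
/- Fix natural numbers n₁, n₂, n₃, n₄ ≥ 1 and k ≥ 2, and let N_a(n, j) = C(n − j − 1, j)·2^j. Define c₁ = Σ 2·N_a(n₁,k₁)·N_a(n₂,k₂)·N_a(n₃,k₃)·N_a(n₄,k₄) and c₂ = Σ 2·[N_a(n₁,k₁+1)·N_a(n₂,k₂)·N_a(n₃,k₃)·N_a(n₄,k₄) + N_a(n₁,k₁)·N_a(n₂,k₂+1)·N_a(n₃,k₃)·N_a(n₄,k₄) + N_a(n₁,k₁)·N_a(n₂,k₂)·N_a(n₃,k₃+1)·N_a(n₄,k₄) + N_a(n₁,k₁)·N_a(n₂,k₂)·N_a(n₃,k₃)·N_a(n₄,k₄+1)],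 both sums over all 4-tuples (k₁,k₂,k₃,k₄) of nonnegative integers with k₁+k₂+k₃+k₄ = k−2. If n₁ ≥ ⌈(n₁+n₂+n₃+n₄)/4⌉ and k < (n₁+n₂+n₃+n₄)/8 + 11/9 − (1/18)·√(9·((n₁+n₂+n₃+n₄)/4)² + 16), then c₂ > c₁. -/
/-- `N_a(n,j) = C(n-j-1, j) · 2^j` (the binomial coefficient is `0` when `n-j-1 < j`). -/
def Na (n j : ℕ) : ℕ := (n - j - 1).choose j * 2 ^ j

lemma key_real (m x j K : ℝ) (hx : m ≤ x) (hj : 0 ≤ j) (hjK : j + 2 ≤ K)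
    (hK : K < m/2 + 11/9 - Real.sqrt (9*m^2+16)/18) :
    (j+1)*(x-j-1) < 2*(x-2*j-1)*(x-2*j-2) ∧ 2*j+2 < x := by
  set s := Real.sqrt (9*m^2+16) with hs
  have hs0 : 0 ≤ s := Real.sqrt_nonneg _
  have hs2 : s^2 = 9*m^2+16 := Real.sq_sqrt (by positivity)
  have hs3 : 3*m ≤ s := by nlinarith
  have h1 : s < 9*m+22-18*K := by linarith
  have hgK : 0 < 9*K^2 - (9*m+22)*K + 2*m^2 + 11*m + 13 := by nlinarith
  have hgj : 0 < 9*(j+2)^2 - (9*m+22)*(j+2) + 2*m^2 + 11*m + 13 := by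
    nlinarith [mul_nonneg (by linarith : (0:ℝ) ≤ K - (j+2))
      (by linarith : (0:ℝ) ≤ 9*m+22-9*(j+2)-9*K)]
  have hm3 : 3*j + 7/3 < m := by linarith
  constructor
  · nlinarith [mul_nonneg (by linarith : (0:ℝ) ≤ x - m)
      (by linarith : (0:ℝ) ≤ 2*(x+m)-9*j-7)]
  · linarith

lemma choose_step (j a : ℕ) (hnat : (j+1)*(j+a+2) < 2*(a+2)*(a+1)) :
    (j+a+2).choose j < 2 * (j+a+1).choose (j+1) := by
  have c1 : (j+a+1).choose (j+1) * (j+1) = (j+a+1).choose j * (a+1) := by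
    rw [Nat.choose_succ_right_eq]; congr 1; omega
  have c2 : (j+a+1).choose j * (j+a+2) = (j+a+2).choose j * (a+2) := by
    have h := Nat.choose_mul_succ_eq (j+a+1) j
    rw [show j+a+1+1 = j+a+2 from rfl] at h
    rw [h]; congr 1; omega
  have hpos : 0 < (j+a+1).choose j := Nat.choose_pos (by omega)
  have key : (j+a+2).choose j * ((a+2)*(j+1)) < (2 * (j+a+1).choose (j+1)) * ((a+2)*(j+1)) := by
    calc (j+a+2).choose j * ((a+2)*(j+1))
        = (j+a+1).choose j * (j+a+2) * (j+1) := by rw [c2]; ring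
      _ < (j+a+1).choose j * (2*(a+2)*(a+1)) := by
          rw [mul_assoc]
          exact (Nat.mul_lt_mul_left hpos).mpr (by
            calc (j+a+2)*(j+1) = (j+1)*(j+a+2) := by ring
              _ < 2*(a+2)*(a+1) := hnat)
      _ = (2 * (j+a+1).choose (j+1)) * ((a+2)*(j+1)) := by
          rw [show 2 * (j+a+1).choose (j+1) * ((a+2)*(j+1))
              = 2 * ((j+a+1).choose (j+1) * (j+1)) * (a+2) from by ring, c1]; ring
  exact Nat.lt_of_mul_lt_mul_right key

/-- The combinatorial core of the proof of Theorem 3: with `n = n₁+n₂+n₃+n₄`, if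
`n₁ ≥ ⌈n/4⌉` and `k < n/8 + 11/9 - (1/18)√(9(n/4)² + 16)`, then `c₂ > c₁`. -/
theorem stmt_15 (n₁ n₂ n₃ n₄ k : ℕ)
    (h₁ : 1 ≤ n₁) (h₂ : 1 ≤ n₂) (h₃ : 1 ≤ n₃) (h₄ : 1 ≤ n₄) (hk : 2 ≤ k)
    (hpig : (n₁ : ℤ) ≥ ⌈((n₁ + n₂ + n₃ + n₄ : ℕ) : ℚ) / 4⌉)
    (hbound : (k : ℝ) < ((n₁ + n₂ + n₃ + n₄ : ℕ) : ℝ) / 8 + 11 / 9 -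
        (1 / 18) * Real.sqrt (9 * (((n₁ + n₂ + n₃ + n₄ : ℕ) : ℝ) / 4) ^ 2 + 16)) :
    (∑ t ∈ Finset.Nat.antidiagonalTuple 4 (k - 2),
        2 * (Na n₁ (t 0) * Na n₂ (t 1) * Na n₃ (t 2) * Na n₄ (t 3))) <
      ∑ t ∈ Finset.Nat.antidiagonalTuple 4 (k - 2),
        2 * (Na n₁ (t 0 + 1) * Na n₂ (t 1) * Na n₃ (t 2) * Na n₄ (t 3) +
             Na n₁ (t 0) * Na n₂ (t 1 + 1) * Na n₃ (t 2) * Na n₄ (t 3) +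
             Na n₁ (t 0) * Na n₂ (t 1) * Na n₃ (t 2 + 1) * Na n₄ (t 3) +
             Na n₁ (t 0) * Na n₂ (t 1) * Na n₃ (t 2) * Na n₄ (t 3 + 1)) := by
  set n : ℕ := n₁ + n₂ + n₃ + n₄ with hn
  have hmq : ((n : ℚ))/4 ≤ (n₁ : ℚ) := by
    have hle : ((⌈((n:ℚ))/4⌉ : ℤ) : ℚ) ≤ (n₁ : ℚ) := by exact_mod_cast hpig
    exact le_trans (Int.le_ceil _) hle
  have hm : ((n : ℝ))/4 ≤ (n₁ : ℝ) := by
    have h := (Rat.cast_le (K := ℝ)).mpr hmq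
    push_cast at h; exact h
  have hbound' : (k : ℝ) < ((n:ℝ)/4)/2 + 11/9 - Real.sqrt (9*((n:ℝ)/4)^2+16)/18 := by
    rw [show ((n:ℝ)/4)/2 = (n:ℝ)/8 from by ring]
    linarith [hbound]
  have key : ∀ j : ℕ, j ≤ k - 2 → Na n₁ j < Na n₁ (j+1) := by
    intro j hj
    have hjK : (j:ℝ) + 2 ≤ (k:ℝ) := by exact_mod_cast (show j + 2 ≤ k by omega)
    obtain ⟨hlt, hx⟩ := key_real ((n:ℝ)/4) (n₁:ℝ) (j:ℝ) (k:ℝ) hm (by positivity) hjK hbound'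
    have hn1 : 2*j+3 ≤ n₁ := by
      have : (2*j+2 : ℝ) < (n₁ : ℝ) := by push_cast; linarith
      exact_mod_cast by exact_mod_cast Nat.lt_iff_add_one_le.mp (by exact_mod_cast this)
    obtain ⟨a, ha⟩ : ∃ a, n₁ = 2*j+3+a := ⟨n₁-(2*j+3), by omega⟩
    have hnat : (j+1)*(j+a+2) < 2*(a+2)*(a+1) := by
      have hr : ((j:ℝ)+1)*((j:ℝ)+a+2) < 2*((a:ℝ)+2)*((a:ℝ)+1) := by
        have hx2 : (n₁ : ℝ) = 2*(j:ℝ)+3+(a:ℝ) := by rw [ha]; push_cast; ring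
        rw [hx2] at hlt; nlinarith [hlt]
      exact_mod_cast hr
    have hch := choose_step j a hnat
    rw [ha]
    show ((2*j+3+a) - j - 1).choose j * 2^j < ((2*j+3+a) - (j+1) - 1).choose (j+1) * 2^(j+1)
    rw [show (2*j+3+a) - j - 1 = j+a+2 from by omega,
        show (2*j+3+a) - (j+1) - 1 = j+a+1 from by omega, pow_succ]
    calc (j+a+2).choose j * 2^j < (2 * (j+a+1).choose (j+1)) * 2^j :=
          (Nat.mul_lt_mul_right (pow_pos (by norm_num : (0:ℕ) < 2) j)).mpr hch
      _ = (j+a+1).choose (j+1) * (2^j * 2) := by ring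
  apply Finset.sum_lt_sum
  · intro t ht
    rw [Finset.Nat.mem_antidiagonalTuple] at ht
    rw [Fin.sum_univ_four] at ht
    have ht0 : t 0 ≤ k - 2 := by omega
    have hA := (key (t 0) ht0).le
    calc 2 * (Na n₁ (t 0) * Na n₂ (t 1) * Na n₃ (t 2) * Na n₄ (t 3))
        ≤ 2 * (Na n₁ (t 0 + 1) * Na n₂ (t 1) * Na n₃ (t 2) * Na n₄ (t 3)) := by gcongr
      _ ≤ 2 * (Na n₁ (t 0 + 1) * Na n₂ (t 1) * Na n₃ (t 2) * Na n₄ (t 3) +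
             Na n₁ (t 0) * Na n₂ (t 1 + 1) * Na n₃ (t 2) * Na n₄ (t 3) +
             Na n₁ (t 0) * Na n₂ (t 1) * Na n₃ (t 2 + 1) * Na n₄ (t 3) +
             Na n₁ (t 0) * Na n₂ (t 1) * Na n₃ (t 2) * Na n₄ (t 3 + 1)) :=
          Nat.mul_le_mul_left 2 (by
            exact le_trans (Nat.le_add_right _ _) (le_trans (Nat.le_add_right _ _)
              (Nat.le_add_right _ _)))
  · refine ⟨![k-2,0,0,0], ?_, ?_⟩
    · rw [Finset.Nat.mem_antidiagonalTuple, Fin.sum_univ_four]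
      simp
    · have hkey := key (k-2) le_rfl
      have h0 : ∀ m : ℕ, Na m 0 = 1 := by intro m; simp [Na]
      simp only [Matrix.cons_val_zero, Matrix.cons_val_one, Matrix.head_cons,
        Matrix.cons_val_two, Matrix.tail_cons, Matrix.cons_val_three, h0,
        mul_one, one_mul]
      linarith [hkey, Nat.zero_le (Na n₁ (k-2) * Na n₂ 1),
        Nat.zero_le (Na n₁ (k-2) * Na n₃ 1), Nat.zero_le (Na n₁ (k-2) * Na n₄ 1)]
end
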